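/- arXiv:1711.07910 — 5 statements merged into one kernel-verified Lean document; each statement's English description precedes it below -/
import Mathlib

section
/- If k and k' are universal kernels on compact metric spaces Ω and Ω' respectively (i.e., their RKHSs are dense in the continuous functions with respect to the supremum norm), then the product kernel k̄((x,x'),(y,y')) := k(x,y)·k'(x',y') is a universal kernel on the product space Ω × Ω'. -/
/-- A kernel on a set `Ω`: symmetric and positive semi-definite. -/
def IsKernel {Ω : Type*} (k : Ω → Ω → ℝ) : Prop :=
  (∀ x y, k x y = k y x) ∧
    ∀ (n : ℕ) (x : Fin n → Ω) (c : Fin n → ℝ),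
      0 ≤ ∑ i, ∑ j, c i * c j * k (x i) (x j)

/-- A kernel `k` on a compact space `Ω` is universal if its RKHS (equivalently, the span of
its continuous sections `k x ·`) is dense in `C(Ω, ℝ)` for the supremum norm. -/
def Universal {Ω : Type*} [TopologicalSpace Ω] [CompactSpace Ω] (k : Ω → Ω → ℝ) : Prop :=
  Dense ((Submodule.span ℝ {f : C(Ω, ℝ) | ∃ x : Ω, ∀ y, f y = k x y} :
    Submodule ℝ C(Ω, ℝ)) : Set C(Ω, ℝ))

/-- If `k` and `k'` are universal kernels on compact metric spaces `Ω` and `Ω'`, then the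
product kernel `k̄((x,x'),(y,y')) = k x y * k' x' y'` is universal on `Ω × Ω'`. -/
theorem product_of_universal_kernels_is_universal
    {Ω Ω' : Type*} [MetricSpace Ω] [CompactSpace Ω] [MetricSpace Ω'] [CompactSpace Ω']
    (k : Ω → Ω → ℝ) (k' : Ω' → Ω' → ℝ)
    (hk : IsKernel k) (hk' : IsKernel k')
    (hku : Universal k) (hk'u : Universal k') :
    Universal (fun x y : Ω × Ω' => k x.1 y.1 * k' x.2 y.2) := by
  classical
  -- the tensor map
  set T : C(Ω, ℝ) → C(Ω', ℝ) → C(Ω × Ω', ℝ) :=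
    fun f g => f.comp ⟨Prod.fst, continuous_fst⟩ * g.comp ⟨Prod.snd, continuous_snd⟩ with hT
  set S : Set C(Ω, ℝ) := {f | ∃ x : Ω, ∀ y, f y = k x y} with hS
  set S' : Set C(Ω', ℝ) := {f | ∃ x : Ω', ∀ y, f y = k' x y} with hS'
  set Sb : Set C(Ω × Ω', ℝ) :=
    {f | ∃ x : Ω × Ω', ∀ y, f y = k x.1 y.1 * k' x.2 y.2} with hSb
  set A : Submodule ℝ C(Ω × Ω', ℝ) := (Submodule.span ℝ Sb).topologicalClosure with hA
  -- Step 1: tensors of spans land in span Sb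
  have step1 : ∀ f ∈ Submodule.span ℝ S, ∀ g ∈ Submodule.span ℝ S',
      T f g ∈ Submodule.span ℝ Sb := by
    intro f hf
    induction hf using Submodule.span_induction with
    | mem f hf =>
      intro g hg
      induction hg using Submodule.span_induction with
      | mem g hg =>
        apply Submodule.subset_span
        obtain ⟨x, hx⟩ := hf
        obtain ⟨x', hx'⟩ := hg
        exact ⟨(x, x'), fun y => by simp [hT, hx, hx']⟩
      | zero => simpa [hT] using (Submodule.span ℝ Sb).zero_mem
      | add g g' _ _ h1 h2 => simpa [hT, mul_add] using Submodule.add_mem _ h1 h2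
      | smul c g _ h1 => simpa [hT, mul_smul_comm] using Submodule.smul_mem _ c h1
    | zero => intro g hg; simpa [hT] using (Submodule.span ℝ Sb).zero_mem
    | add f f' _ _ h1 h2 =>
      intro g hg
      simpa [hT, add_mul] using Submodule.add_mem _ (h1 g hg) (h2 g hg)
    | smul c f _ h1 =>
      intro g hg
      simpa [hT, smul_mul_assoc] using Submodule.smul_mem _ c (h1 g hg)
  -- Step 2: all pure tensors are in A
  have hTcont1 : ∀ g : C(Ω', ℝ), Continuous fun f => T f g := by
    intro g
    exact ((ContinuousMap.continuous_precomp _).mul continuous_const)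
  have hTcont2 : ∀ f : C(Ω, ℝ), Continuous fun g => T f g := by
    intro f
    exact (continuous_const.mul (ContinuousMap.continuous_precomp _))
  have step2 : ∀ (f : C(Ω, ℝ)) (g : C(Ω', ℝ)), T f g ∈ A := by
    have half : ∀ f : C(Ω, ℝ), ∀ g ∈ Submodule.span ℝ S', T f g ∈ A := by
      intro f g hg
      have hmaps : Set.MapsTo (fun f => T f g) (Submodule.span ℝ S : Set C(Ω, ℝ)) A :=
        fun p hp => (Submodule.span ℝ Sb).le_topologicalClosure (step1 p hp g hg)
      have hcl := hmaps.closure (hTcont1 g)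
      have hf : f ∈ closure (Submodule.span ℝ S : Set C(Ω, ℝ)) := by
        rw [hku.closure_eq]; trivial
      have := hcl hf
      rwa [IsClosed.closure_eq (Submodule.isClosed_topologicalClosure _)] at this
    intro f g
    have hmaps : Set.MapsTo (fun g => T f g) (Submodule.span ℝ S' : Set C(Ω', ℝ)) A :=
      fun p hp => half f p hp
    have hcl := hmaps.closure (hTcont2 f)
    have hg : g ∈ closure (Submodule.span ℝ S' : Set C(Ω', ℝ)) := by
      rw [hk'u.closure_eq]; trivial
    have := hcl hg
    rwa [IsClosed.closure_eq (Submodule.isClosed_topologicalClosure _)] at this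
  -- the set of pure tensors
  set G : Set C(Ω × Ω', ℝ) := {h | ∃ f g, h = T f g} with hG
  -- span G is closed under multiplication
  have mulmem : ∀ p ∈ Submodule.span ℝ G, ∀ q ∈ Submodule.span ℝ G,
      p * q ∈ Submodule.span ℝ G := by
    intro p hp
    induction hp using Submodule.span_induction with
    | mem p hp =>
      intro q hq
      induction hq using Submodule.span_induction with
      | mem q hq =>
        apply Submodule.subset_span
        obtain ⟨f, g, rfl⟩ := hp
        obtain ⟨f', g', rfl⟩ := hq
        refine ⟨f * f', g * g', ?_⟩
        ext y
        simp [hT]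
        ring
      | zero => simpa using (Submodule.span ℝ G).zero_mem
      | add q q' _ _ h1 h2 => simpa [mul_add] using Submodule.add_mem _ h1 h2
      | smul c q _ h1 => simpa [mul_smul_comm] using Submodule.smul_mem _ c h1
    | zero => intro q hq; simpa using (Submodule.span ℝ G).zero_mem
    | add p p' _ _ h1 h2 =>
      intro q hq
      simpa [add_mul] using Submodule.add_mem _ (h1 q hq) (h2 q hq)
    | smul c p _ h1 =>
      intro q hq
      simpa [smul_mul_assoc] using Submodule.smul_mem _ c (h1 q hq)
  -- the adjoin algebra is contained in span G
  have adjoin_le : (Algebra.adjoin ℝ G : Set C(Ω × Ω', ℝ)) ⊆ Submodule.span ℝ G := by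
    intro p hp
    induction hp using Algebra.adjoin_induction with
    | mem p hp => exact Submodule.subset_span hp
    | algebraMap r =>
      have : (algebraMap ℝ C(Ω × Ω', ℝ)) r = T (r • 1) 1 := by
        ext y; simp [hT, Algebra.algebraMap_eq_smul_one]
      rw [this]
      exact Submodule.subset_span ⟨_, _, rfl⟩
    | add p q _ _ h1 h2 => exact Submodule.add_mem _ h1 h2
    | mul p q _ _ h1 h2 => exact mulmem p h1 q h2
  -- the adjoin algebra separates points
  have hsep : (Algebra.adjoin ℝ G).SeparatesPoints := by
    intro z w hzw
    by_cases h1 : z.1 = w.1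
    · have h2 : z.2 ≠ w.2 := fun h2 => hzw (Prod.ext h1 h2)
      refine ⟨T 1 ⟨fun u => dist u w.2, by fun_prop⟩, ⟨_, Algebra.subset_adjoin ⟨_, _, rfl⟩, rfl⟩, ?_⟩
      simp [hT, dist_eq_zero, h2]
    · refine ⟨T ⟨fun u => dist u w.1, by fun_prop⟩ 1, ⟨_, Algebra.subset_adjoin ⟨_, _, rfl⟩, rfl⟩, ?_⟩
      simp [hT, dist_eq_zero, h1]
  -- Stone-Weierstrass
  have hdense := ContinuousMap.subalgebra_topologicalClosure_eq_top_of_separatesPoints _ hsep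
  -- conclude
  show Dense ((Submodule.span ℝ Sb : Submodule ℝ C(Ω × Ω', ℝ)) : Set C(Ω × Ω', ℝ))
  have hGA : G ⊆ (A : Set C(Ω × Ω', ℝ)) := by
    rintro p ⟨f, g, rfl⟩; exact step2 f g
  have hspanG : ∀ p ∈ Submodule.span ℝ G, p ∈ A :=
    fun p hp => Submodule.span_le.mpr hGA hp
  have hadj : (Algebra.adjoin ℝ G : Set C(Ω × Ω', ℝ)) ⊆ (A : Set _) :=
    fun p hp => hspanG p (adjoin_le hp)
  have hcl : closure (Algebra.adjoin ℝ G : Set C(Ω × Ω', ℝ)) ⊆ (A : Set _) :=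
    closure_minimal hadj (Submodule.isClosed_topologicalClosure _)
  have htop : Set.univ ⊆ (A : Set C(Ω × Ω', ℝ)) := by
    rw [← Subalgebra.topologicalClosure_coe] at hcl
    rw [hdense] at hcl
    simpa using hcl
  have hAeq : (A : Set C(Ω × Ω', ℝ)) = closure ((Submodule.span ℝ Sb : Submodule ℝ _) : Set _) := rfl
  rw [dense_iff_closure_eq, ← hAeq]
  exact Set.eq_univ_of_univ_subset htop
end

section
/- The exponential kernel k(x,x') = exp(κ⟨x,x'⟩) for κ > 0 is a universal kernel on any compact subset of ℝ^d. -/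
/-!
Expanding the exponential over words `p = ⟨n, f⟩` in the features `gᵢ`,
`exp (κ ∑ᵢ gᵢ x * gᵢ y) = ∑ₚ κⁿ / n! * mₚ x * mₚ y` with `mₚ = ∏ⱼ g (f j)` a monomial.
If a continuous functional `ℓ` kills every section `k x ·`, then `F = ∑ₚ κⁿ / n! * ℓ mₚ • mₚ`
vanishes pointwise, so `0 = ℓ F = ∑ₚ κⁿ / n! * (ℓ mₚ)²` and `ℓ` kills every monomial.
For coordinate features the monomials span a point-separating subalgebra, which is dense by
Stone–Weierstrass; hence `ℓ = 0`, and by Hahn–Banach the sections span a dense subspace.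
-/

open scoped RealInnerProductSpace

open Set
open scoped Nat

theorem Submodule.dense_of_forall_dual_eq_zero {E : Type*} [TopologicalSpace E] [AddCommGroup E]
    [Module ℝ E] [IsTopologicalAddGroup E] [ContinuousSMul ℝ E] [LocallyConvexSpace ℝ E]
    (p : Submodule ℝ E) (h : ∀ ℓ : StrongDual ℝ E, (∀ x ∈ p, ℓ x = 0) → ℓ = 0) :
    Dense (p : Set E) := by
  intro x
  by_contra hx
  obtain ⟨f, u, hfu, hux⟩ := geometric_hahn_banach_closed_point p.convex.closure isClosed_closure hx
  -- a linear functional bounded above on a subspace vanishes on it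
  have hf : ∀ v ∈ p, f v = 0 := fun v hv => by
    by_contra hne
    have := hfu _ (subset_closure (p.smul_mem ((u + 1) / f v) hv))
    rw [map_smul, smul_eq_mul, div_mul_cancel₀ _ hne] at this
    linarith
  have h0 := hfu 0 (subset_closure p.zero_mem)
  simp only [h f hf, zero_apply] at hux h0
  linarith

theorem summable_mul_smul_of_abs_le {E ι : Type*} [NormedAddCommGroup E] [NormedSpace ℝ E]
    [CompleteSpace E] {w : ι → ℝ} {e : ι → E} (hw : ∀ i, 0 ≤ w i)
    (hsum : Summable fun i => w i * ‖e i‖ ^ 2) {c : ι → ℝ} {C : ℝ}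
    (hc : ∀ i, |c i| ≤ C * ‖e i‖) : Summable fun i => (w i * c i) • e i := by
  refine (hsum.mul_left C).of_norm_bounded fun i => ?_
  rw [norm_smul, norm_mul, Real.norm_of_nonneg (hw i), Real.norm_eq_abs]
  calc w i * |c i| * ‖e i‖ ≤ w i * (C * ‖e i‖) * ‖e i‖ := by gcongr; exacts [hw i, hc i]
    _ = C * (w i * ‖e i‖ ^ 2) := by ring

theorem universal_of_hasSum_mul {X ι : Type*} [TopologicalSpace X] [CompactSpace X]
    {w : ι → ℝ} {e : ι → C(X, ℝ)} (hw : ∀ i, 0 < w i) (hsum : Summable fun i => w i * ‖e i‖ ^ 2)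
    {k : X → X → ℝ} (hk : ∀ x y, HasSum (fun i => w i * e i x * e i y) (k x y))
    (he : Dense (Submodule.span ℝ (range e) : Set C(X, ℝ))) : Universal k := by
  have hw₀ i := (hw i).le
  have hs x : HasSum (fun i => (w i * e i x) • e i) (∑' i, (w i * e i x) • e i) :=
    (summable_mul_smul_of_abs_le hw₀ hsum (C := 1) fun i => by
      simpa using (e i).norm_coe_le_norm x).hasSum
  have hs_apply x y : (∑' i, (w i * e i x) • e i) y = k x y :=
    ((ContinuousMap.evalCLM ℝ y).hasSum (hs x)).unique (by simpa using hk x y)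
  refine Submodule.dense_of_forall_dual_eq_zero _ fun ℓ hℓ => ?_
  have hℓs x : ℓ (∑' i, (w i * e i x) • e i) = 0 :=
    hℓ _ (Submodule.subset_span ⟨x, hs_apply x⟩)
  have hF : HasSum (fun i => (w i * ℓ (e i)) • e i) (∑' i, (w i * ℓ (e i)) • e i) :=
    (summable_mul_smul_of_abs_le hw₀ hsum (C := ‖ℓ‖) fun i => ℓ.le_opNorm (e i)).hasSum
  -- by the symmetry of the expansion, this sum evaluated at `y` is `ℓ (k y ·) = 0`
  have hF_eq_zero : ∑' i, (w i * ℓ (e i)) • e i = 0 := by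
    ext y
    refine ((ContinuousMap.evalCLM ℝ y).hasSum hF).unique ?_
    have hℓsy := ℓ.hasSum (hs y)
    rw [hℓs y] at hℓsy
    simpa [mul_right_comm] using hℓsy
  rw [hF_eq_zero] at hF
  have hℓe i : ℓ (e i) = 0 := by
    have hsq : HasSum (fun i => w i * ℓ (e i) ^ 2) 0 := by
      simpa [sq, mul_assoc] using ℓ.hasSum hF
    rw [hasSum_zero_iff_of_nonneg fun i => mul_nonneg (hw₀ i) (sq_nonneg _)] at hsq
    simpa [(hw i).ne'] using congrFun hsq i
  exact ContinuousLinearMap.ext_on he (by rintro _ ⟨i, rfl⟩; simpa using hℓe i)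

theorem Real.hasSum_prod_div_factorial_exp_sum {ι : Type*} [Fintype ι] (c : ι → ℝ) :
    HasSum (fun p : Σ n, Fin n → ι => (∏ j, c (p.2 j)) / p.1 !) (Real.exp (∑ i, c i)) := by
  have hfiber (c : ι → ℝ) (n : ℕ) :
      HasSum (fun f : Fin n → ι => (∏ j, c (f j)) / n !) ((∑ i, c i) ^ n / n !) := by
    rw [Fintype.sum_pow, Finset.sum_div]
    exact hasSum_fintype _
  have habs : Summable fun p : Σ n, Fin n → ι => ‖(∏ j, c (p.2 j)) / (p.1 !)‖ := by
    simp only [norm_div, norm_prod, Real.norm_eq_abs, Nat.abs_cast]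
    refine (summable_sigma_of_nonneg fun p => by positivity).2
      ⟨fun n => (hfiber (fun i => |c i|) n).summable, ?_⟩
    exact (Real.summable_pow_div_factorial (∑ i, |c i|)).congr fun n =>
      (hfiber (fun i => |c i|) n).tsum_eq.symm
  rw [Real.exp_eq_exp_ℝ]
  exact (NormedSpace.expSeries_div_hasSum_exp _).sigma_of_hasSum (hfiber c) habs.of_norm

def wordProd {ι M : Type*} [CommMonoid M] (g : ι → M) (p : Σ n, Fin n → ι) : M :=
  ∏ j, g (p.2 j)

theorem Submonoid.closure_range_subset_range_wordProd {ι M : Type*} [CommMonoid M] (g : ι → M) :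
    (Submonoid.closure (range g) : Set M) ⊆ range (wordProd g) := by
  intro a ha
  induction ha using Submonoid.closure_induction with
  | mem a ha =>
    obtain ⟨i, rfl⟩ := ha
    exact ⟨⟨1, fun _ => i⟩, by simp [wordProd]⟩
  | one => exact ⟨⟨0, Fin.elim0⟩, by simp [wordProd]⟩
  | mul a b _ _ ha hb =>
    obtain ⟨⟨m, f⟩, rfl⟩ := ha
    obtain ⟨⟨n, f'⟩, rfl⟩ := hb
    exact ⟨⟨m + n, Fin.append f f'⟩, by simp [wordProd, Fin.prod_univ_add]⟩

theorem ContinuousMap.norm_wordProd_le {X ι : Type*} [TopologicalSpace X] [CompactSpace X]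
    (g : ι → C(X, ℝ)) (p : Σ n, Fin n → ι) : ‖wordProd g p‖ ≤ ∏ j, ‖g (p.2 j)‖ := by
  refine (ContinuousMap.norm_le _ (by positivity)).2 fun x => ?_
  simpa [wordProd, Finset.abs_prod] using
    Finset.prod_le_prod (fun j _ => abs_nonneg _) fun j _ => (g (p.2 j)).norm_coe_le_norm x

theorem ContinuousMap.dense_span_range_wordProd {X ι : Type*} [TopologicalSpace X]
    [CompactSpace X] (g : ι → C(X, ℝ)) (hg : ∀ x y, x ≠ y → ∃ i, g i x ≠ g i y) :
    Dense (Submodule.span ℝ (range (wordProd g)) : Set C(X, ℝ)) := by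
  set A := Algebra.adjoin ℝ (range g)
  have hA : A.topologicalClosure = ⊤ :=
    subalgebra_topologicalClosure_eq_top_of_separatesPoints A fun x y hxy =>
      let ⟨i, hi⟩ := hg x y hxy
      ⟨g i, ⟨g i, Algebra.subset_adjoin ⟨i, rfl⟩, rfl⟩, hi⟩
  have hA_le : (A : Set C(X, ℝ)) ⊆ Submodule.span ℝ (range (wordProd g)) := fun f hf =>
    Submodule.span_mono (Submonoid.closure_range_subset_range_wordProd g)
      (Algebra.adjoin_eq_span (R := ℝ) (s := range g) ▸ hf)
  refine Dense.mono hA_le ?_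
  rw [dense_iff_closure_eq, ← Subalgebra.topologicalClosure_coe, hA, Algebra.coe_top]

theorem universal_exp_mul_sum_mul {X ι : Type*} [TopologicalSpace X] [CompactSpace X] [Fintype ι]
    (g : ι → C(X, ℝ)) (hg : ∀ x y, x ≠ y → ∃ i, g i x ≠ g i y) {κ : ℝ} (hκ : 0 < κ) :
    Universal fun x y => Real.exp (κ * ∑ i, g i x * g i y) := by
  refine universal_of_hasSum_mul (w := fun p : Σ n, Fin n → ι => κ ^ p.1 / (p.1 !))
    (fun p => by positivity) ?_ (fun x y => ?_) (ContinuousMap.dense_span_range_wordProd g hg)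
  · refine (Real.hasSum_prod_div_factorial_exp_sum fun i => κ * ‖g i‖ ^ 2).summable.of_nonneg_of_le
      (fun p => by positivity) fun ⟨n, f⟩ => ?_
    calc κ ^ n / n ! * ‖wordProd g ⟨n, f⟩‖ ^ 2
        ≤ κ ^ n / n ! * (∏ j, ‖g (f j)‖) ^ 2 := by
          gcongr
          exact ContinuousMap.norm_wordProd_le g ⟨n, f⟩
      _ = (∏ j, κ * ‖g (f j)‖ ^ 2) / n ! := by
          rw [Finset.prod_mul_distrib, Finset.prod_pow]
          simp only [Finset.prod_const, Finset.card_univ, Fintype.card_fin]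
          ring
  · convert Real.hasSum_prod_div_factorial_exp_sum fun i => κ * (g i x * g i y) using 1
    · ext ⟨n, f⟩
      simp only [wordProd, ContinuousMap.prod_apply, Finset.prod_mul_distrib, Finset.prod_const,
        Finset.card_univ, Fintype.card_fin]
      ring
    · rw [Finset.mul_sum]

/-- The exponential kernel `k(x,x') = exp(κ ⟨x,x'⟩)`, `κ > 0`, is universal on any compact
subset of `ℝ^d`. -/
theorem exponential_kernel_universal
    (d : ℕ) (K : Set (EuclideanSpace ℝ (Fin d))) (hK : IsCompact K)
    (κ : ℝ) (hκ : 0 < κ) :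
    @Universal K _ (isCompact_iff_compactSpace.mp hK)
      (fun x y : K => Real.exp (κ * ⟪(x : EuclideanSpace ℝ (Fin d)), (y : EuclideanSpace ℝ (Fin d))⟫)) := by
  have := isCompact_iff_compactSpace.mp hK
  let coord (i : Fin d) : C(K, ℝ) := ⟨fun x => (x : EuclideanSpace ℝ (Fin d)) i, by fun_prop⟩
  have hcoord : ∀ x y : K, x ≠ y → ∃ i, coord i x ≠ coord i y := fun x y hxy => by
    by_contra! h
    exact hxy (Subtype.ext (PiLp.ext h))
  convert universal_exp_mul_sum_mul coord hcoord hκ using 4 with x y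
  simp [coord, PiLp.inner_apply, mul_comm]
end

section
/- Let K be a kernel on a Hilbert space H with canonical feature map Φ_K, and suppose Φ_K is Hölder continuous of order α with constant L on a ball B ⊆ H, i.e., ‖Φ_K(v) − Φ_K(w)‖ ≤ L‖v−w‖^α for v,w ∈ B. Let k̄ be the product kernel k̄((P,x),(P',x')) = K(Ψ(P),Ψ(P'))·k_X(x,x') where k_X is bounded by B_k², and Ψ maps distributions into B. Then for any f in the RKHS of k̄ with ‖f‖ ≤ R, and any two distributions P, P̂ with Ψ(P), Ψ(P̂) ∈ B, one has sup_x |f(P̂,x) − f(P,x)| ≤ R·B_k·L·‖Ψ(P) − Ψ(P̂)‖^α. -/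
open scoped RealInnerProductSpace

/-- Let `k̄((P,x),(P',x')) = K(Ψ P, Ψ P') * k_X(x,x')` be a product kernel, where the
canonical feature map `Φ_K` of `K` is `α`-Hölder with constant `L` on a ball `B ⊆ H`
containing the mean embeddings, and `k_X` is bounded by `B_k²`.  Then for any `f` in the
RKHS of `k̄` with `‖f‖ ≤ R` (represented by a vector `w` of norm at most `R` through a
feature map `φ` of `k̄`) and any distributions `P`, `P̂`,
`sup_x |f(P̂,x) - f(P,x)| ≤ R B_k L ‖Ψ P - Ψ P̂‖^α`. -/
theorem rkhs_marginal_perturbation_bound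
    {D 𝒳 : Type*}
    {H HK Hbar : Type*}
    [NormedAddCommGroup H] [InnerProductSpace ℝ H]
    [NormedAddCommGroup HK] [InnerProductSpace ℝ HK]
    [NormedAddCommGroup Hbar] [InnerProductSpace ℝ Hbar]
    (K : H → H → ℝ) (ΦK : H → HK) (hK : ∀ u v, K u v = ⟪ΦK u, ΦK v⟫)
    (kX : 𝒳 → 𝒳 → ℝ) (Bk : ℝ) (hBk : 0 ≤ Bk) (hkXbound : ∀ x, kX x x ≤ Bk ^ 2)
    (Ψ : D → H)
    (B : Set H) (α L : ℝ) (hα : α ∈ Set.Ioc (0 : ℝ) 1) (hL : 0 ≤ L)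
    (hHolder : ∀ v ∈ B, ∀ w ∈ B, ‖ΦK v - ΦK w‖ ≤ L * ‖v - w‖ ^ α)
    (φ : D × 𝒳 → Hbar)
    (hφ : ∀ p q : D × 𝒳, ⟪φ p, φ q⟫ = K (Ψ p.1) (Ψ q.1) * kX p.2 q.2)
    (f : D × 𝒳 → ℝ) (w : Hbar) (R : ℝ)
    (hf : ∀ p, f p = ⟪w, φ p⟫) (hw : ‖w‖ ≤ R)
    (P Phat : D) (hP : Ψ P ∈ B) (hPhat : Ψ Phat ∈ B) :
    ∀ x : 𝒳, |f (Phat, x) - f (P, x)| ≤ R * Bk * L * ‖Ψ P - Ψ Phat‖ ^ α := by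
  intro x
  have hdiff : f (Phat, x) - f (P, x) = ⟪w, φ (Phat, x) - φ (P, x)⟫ := by
    rw [hf, hf, inner_sub_right]
  have key : ‖φ (Phat, x) - φ (P, x)‖ ^ 2
      = ‖ΦK (Ψ Phat) - ΦK (Ψ P)‖ ^ 2 * kX x x := by
    rw [@norm_sub_sq_real, @norm_sub_sq_real,
        ← real_inner_self_eq_norm_sq, ← real_inner_self_eq_norm_sq,
        ← real_inner_self_eq_norm_sq, ← real_inner_self_eq_norm_sq,
        hφ, hφ, hφ, hK, hK, hK]
    ring
  set t : ℝ := ‖Ψ P - Ψ Phat‖ ^ α with ht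
  have htn : 0 ≤ t := by positivity
  have hHol : ‖ΦK (Ψ Phat) - ΦK (Ψ P)‖ ≤ L * t := by
    have := hHolder (Ψ Phat) hPhat (Ψ P) hP
    rwa [norm_sub_rev (Ψ Phat)] at this
  have hnormd : ‖φ (Phat, x) - φ (P, x)‖ ≤ L * t * Bk := by
    have h1 : ‖φ (Phat, x) - φ (P, x)‖ ^ 2 ≤ (L * t * Bk) ^ 2 := by
      rw [key]
      have hc : (0:ℝ) ≤ ‖ΦK (Ψ Phat) - ΦK (Ψ P)‖ ^ 2 := by positivity
      have h2 : ‖ΦK (Ψ Phat) - ΦK (Ψ P)‖ ^ 2 * kX x x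
          ≤ ‖ΦK (Ψ Phat) - ΦK (Ψ P)‖ ^ 2 * Bk ^ 2 :=
        mul_le_mul_of_nonneg_left (hkXbound x) hc
      have h3 : ‖ΦK (Ψ Phat) - ΦK (Ψ P)‖ ^ 2 ≤ (L * t) ^ 2 := by
        have := pow_le_pow_left₀ (norm_nonneg _) hHol 2
        simpa using this
      nlinarith [sq_nonneg Bk]
    have hpos : 0 ≤ L * t * Bk := by positivity
    nlinarith [norm_nonneg (φ (Phat, x) - φ (P, x))]
  have hR : 0 ≤ R := le_trans (norm_nonneg w) hw
  calc |f (Phat, x) - f (P, x)| = |⟪w, φ (Phat, x) - φ (P, x)⟫| := by rw [hdiff]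
    _ ≤ ‖w‖ * ‖φ (Phat, x) - φ (P, x)‖ := abs_real_inner_le_norm _ _
    _ ≤ R * (L * t * Bk) := mul_le_mul hw hnormd (norm_nonneg _) hR
    _ = R * Bk * L * t := by ring
end

section
/- Let K(u,v) = g(‖u−v‖²) be a kernel on a Hilbert space, where g: [0, 4B²] → ℝ is twice differentiable with ‖g'‖_∞ ≤ C₁ and ‖g''‖_∞ ≤ C₂. Then for all u, v in the ball of radius B, the canonical feature map Φ_K satisfies ‖Φ_K(u) − Φ_K(v)‖ ≤ sqrt(2C₁ + 16C₂B²)·‖u−v‖, i.e., Φ_K is Lipschitz with constant sqrt(2C₁ + 16C₂B²). -/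
open scoped RealInnerProductSpace

/-- For a radial kernel `K(u,v) = g(‖u-v‖²)` with `g` twice differentiable on `[0, 4B²]`,
`‖g'‖_∞ ≤ C₁` and `‖g''‖_∞ ≤ C₂` there, the canonical feature map `Φ_K` is Lipschitz on
the ball of radius `B` with constant `√(2C₁ + 16C₂B²)`. -/
theorem radial_kernel_feature_map_lipschitz
    {H HK : Type*}
    [NormedAddCommGroup H] [InnerProductSpace ℝ H]
    [NormedAddCommGroup HK] [InnerProductSpace ℝ HK]
    (g g' g'' : ℝ → ℝ) (B C₁ C₂ : ℝ) (hB : 0 ≤ B)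
    (hg' : ∀ t ∈ Set.Icc (0 : ℝ) (4 * B ^ 2),
      HasDerivWithinAt g (g' t) (Set.Icc (0 : ℝ) (4 * B ^ 2)) t)
    (hg'' : ∀ t ∈ Set.Icc (0 : ℝ) (4 * B ^ 2),
      HasDerivWithinAt g' (g'' t) (Set.Icc (0 : ℝ) (4 * B ^ 2)) t)
    (hC₁ : ∀ t ∈ Set.Icc (0 : ℝ) (4 * B ^ 2), |g' t| ≤ C₁)
    (hC₂ : ∀ t ∈ Set.Icc (0 : ℝ) (4 * B ^ 2), |g'' t| ≤ C₂)
    (ΦK : H → HK) (hK : ∀ u v : H, g (‖u - v‖ ^ 2) = ⟪ΦK u, ΦK v⟫) :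
    ∀ u ∈ Metric.closedBall (0 : H) B, ∀ v ∈ Metric.closedBall (0 : H) B,
      ‖ΦK u - ΦK v‖ ≤ Real.sqrt (2 * C₁ + 16 * C₂ * B ^ 2) * ‖u - v‖ := by
  intro u hu v hv
  simp only [Metric.mem_closedBall, dist_zero_right] at hu hv
  set t := ‖u - v‖ ^ 2 with ht_def
  have h0mem : (0 : ℝ) ∈ Set.Icc (0 : ℝ) (4 * B ^ 2) := by
    constructor <;> positivity
  have hC₁0 : 0 ≤ C₁ := (abs_nonneg _).trans (hC₁ 0 h0mem)
  have hC₂0 : 0 ≤ C₂ := (abs_nonneg _).trans (hC₂ 0 h0mem)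
  have huv : ‖u - v‖ ≤ 2 * B := by
    calc ‖u - v‖ ≤ ‖u‖ + ‖v‖ := norm_sub_le u v
    _ ≤ 2 * B := by linarith
  have htmem : t ∈ Set.Icc (0 : ℝ) (4 * B ^ 2) := by
    constructor
    · positivity
    · have := mul_self_le_mul_self (norm_nonneg (u - v)) huv
      rw [ht_def]; nlinarith
  -- MVT bound
  have hmvt : |g t - g 0| ≤ C₁ * t := by
    have := (convex_Icc (0 : ℝ) (4 * B ^ 2)).norm_image_sub_le_of_norm_hasDerivWithin_le
      (f' := g') (fun x hx => hg' x hx) (fun x hx => hC₁ x hx) h0mem htmem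
    simpa [Real.norm_eq_abs, abs_of_nonneg htmem.1] using this
  -- norm squared identity
  have hnormsq : ‖ΦK u - ΦK v‖ ^ 2 = 2 * (g 0 - g t) := by
    have h1 : g 0 = ⟪ΦK u, ΦK u⟫ := by
      have := hK u u; simpa using this
    have h2 : g 0 = ⟪ΦK v, ΦK v⟫ := by
      have := hK v v; simpa using this
    have h3 : g t = ⟪ΦK u, ΦK v⟫ := hK u v
    have := @norm_sub_sq_real HK _ _ (ΦK u) (ΦK v)
    rw [this, ← h3, ← real_inner_self_eq_norm_sq, ← real_inner_self_eq_norm_sq, ← h1, ← h2]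
    ring
  have hsq : ‖ΦK u - ΦK v‖ ^ 2 ≤ (2 * C₁ + 16 * C₂ * B ^ 2) * t := by
    rw [hnormsq]
    have h1 : g 0 - g t ≤ C₁ * t := by
      have := abs_le.mp hmvt
      linarith [this.1]
    nlinarith [htmem.1, mul_nonneg (mul_nonneg hC₂0 (sq_nonneg B)) htmem.1]
  calc ‖ΦK u - ΦK v‖ = Real.sqrt (‖ΦK u - ΦK v‖ ^ 2) := by
        rw [Real.sqrt_sq (norm_nonneg _)]
    _ ≤ Real.sqrt ((2 * C₁ + 16 * C₂ * B ^ 2) * t) := Real.sqrt_le_sqrt hsq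
    _ = Real.sqrt (2 * C₁ + 16 * C₂ * B ^ 2) * ‖u - v‖ := by
        rw [ht_def, Real.sqrt_mul (by nlinarith [mul_nonneg hC₂0 (sq_nonneg B)]),
          Real.sqrt_sq (norm_nonneg _)]
end

section
/- Let K be a kernel on a Hilbert space H such that for any u, v in a ball B ⊆ H and any unit vector e, the function h(λ,μ) = K(u+λe, v+μe) admits a mixed partial derivative ∂₁∂₂h bounded in absolute value by C² uniformly. Then the canonical feature map Φ_K of K is Lipschitz on B with constant C: ‖Φ_K(u) − Φ_K(v)‖ ≤ C‖u−v‖. -/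
open scoped RealInnerProductSpace

private lemma hasDerivAt_of_shift {f : ℝ → ℝ} {d a : ℝ}
    (h : HasDerivAt (fun s => f (a + s)) d 0) : HasDerivAt f d a := by
  have h0 : HasDerivAt (fun s => f (a + s)) d (-a + a) := by simpa using h
  have h2 : HasDerivAt (fun x : ℝ => f (a + (-a + x))) d a :=
    HasDerivAt.comp_const_add (-a) a h0
  have heq : (fun x : ℝ => f (a + (-a + x))) = f := by
    funext x; congr 1; ring
  rwa [heq] at h2

/-- If for all `u, v` in a ball `B ⊆ H` and every unit vector `e`, the function
`h(λ,μ) = K(u + λe, v + μe)` admits a mixed partial derivative `∂₁∂₂ h` at `(0,0)`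
bounded in absolute value by `C²`, then the canonical feature map `Φ_K` of `K` is
Lipschitz on `B` with constant `C`. -/
theorem feature_map_lipschitz_of_mixed_partials
    {H HK : Type*}
    [NormedAddCommGroup H] [InnerProductSpace ℝ H]
    [NormedAddCommGroup HK] [InnerProductSpace ℝ HK]
    (K : H → H → ℝ) (ΦK : H → HK) (hK : ∀ u v, K u v = ⟪ΦK u, ΦK v⟫)
    (c : H) (r : ℝ) (C : ℝ) (hC : 0 ≤ C)
    (hmixed : ∀ u ∈ Metric.closedBall c r, ∀ v ∈ Metric.closedBall c r,
      ∀ e : H, ‖e‖ = 1 →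
        ∃ d₂ : ℝ → ℝ,
          (∀ lam : ℝ, HasDerivAt (fun mu : ℝ => K (u + lam • e) (v + mu • e)) (d₂ lam) 0) ∧
          ∃ D : ℝ, HasDerivAt d₂ D 0 ∧ |D| ≤ C ^ 2) :
    ∀ u ∈ Metric.closedBall c r, ∀ v ∈ Metric.closedBall c r,
      ‖ΦK u - ΦK v‖ ≤ C * ‖u - v‖ := by
  intro u hu v hv
  rcases eq_or_ne v u with rfl | hne
  · simp [mul_nonneg hC (norm_nonneg _)]
  set t : ℝ := ‖v - u‖ with ht
  have ht0 : 0 < t := by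
    rw [ht]; exact norm_pos_iff.mpr (sub_ne_zero.mpr hne)
  set e : H := t⁻¹ • (v - u) with he_def
  have he : ‖e‖ = 1 := by
    rw [he_def, norm_smul, Real.norm_eq_abs, abs_inv, abs_of_pos ht0, ← ht,
      inv_mul_cancel₀ ht0.ne']
  have hsm : ∀ s : ℝ, s • e = (s / t) • (v - u) := by
    intro s; rw [he_def, smul_smul, div_eq_mul_inv]
  have hmem : ∀ s ∈ Set.Icc (0:ℝ) t, u + s • e ∈ Metric.closedBall c r := by
    intro s hs
    rw [hsm]
    exact (convex_closedBall c r).add_smul_sub_mem hu hv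
      ⟨div_nonneg hs.1 ht0.le, div_le_one_of_le₀ hs.2 ht0.le⟩
  have hvte : v = u + t • e := by
    rw [hsm, div_self ht0.ne', one_smul, add_sub_cancel]
  set G : ℝ → ℝ := fun mu => K v (u + mu • e) - K u (u + mu • e) with hGdef
  -- key: G is differentiable on [0,t] with derivative bounded by C^2 * t
  have key : ∀ μ₀ ∈ Set.Icc (0:ℝ) t, ∃ D, HasDerivAt G D μ₀ ∧ |D| ≤ C ^ 2 * t := by
    intro μ₀ hμ₀
    obtain ⟨g, hg, -⟩ := hmixed u hu (u + μ₀ • e) (hmem μ₀ hμ₀) e he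
    have hgshift : ∀ lam : ℝ,
        HasDerivAt (fun mu : ℝ => K (u + lam • e) (u + mu • e)) (g lam) μ₀ := by
      intro lam
      apply hasDerivAt_of_shift
      have heq : (fun s : ℝ => K (u + lam • e) (u + (μ₀ + s) • e))
          = (fun mu : ℝ => K (u + lam • e) (u + μ₀ • e + mu • e)) := by
        funext s; rw [add_smul, add_assoc]
      show HasDerivAt (fun s : ℝ => K (u + lam • e) (u + (μ₀ + s) • e)) (g lam) 0
      rw [heq]; exact hg lam
    have hG : HasDerivAt G (g t - g 0) μ₀ := by
      have h1 := hgshift t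
      have h2 := hgshift 0
      rw [← hvte] at h1
      rw [zero_smul, add_zero] at h2
      exact h1.sub h2
    have hgdiff : ∀ lam₀ ∈ Set.Icc (0:ℝ) t, ∃ D, HasDerivAt g D lam₀ ∧ |D| ≤ C ^ 2 := by
      intro lam₀ hlam₀
      obtain ⟨g', hg', D', hD', hb'⟩ :=
        hmixed (u + lam₀ • e) (hmem lam₀ hlam₀) (u + μ₀ • e) (hmem μ₀ hμ₀) e he
      have hgg : ∀ lam : ℝ, g' lam = g (lam₀ + lam) := by
        intro lam
        have h1 := hg' lam
        have heq : (fun mu : ℝ => K (u + lam₀ • e + lam • e) (u + μ₀ • e + mu • e))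
            = (fun mu : ℝ => K (u + (lam₀ + lam) • e) (u + μ₀ • e + mu • e)) := by
          funext mu; rw [add_smul, add_assoc]
        rw [heq] at h1
        exact h1.unique (hg (lam₀ + lam))
      refine ⟨D', ?_, hb'⟩
      apply hasDerivAt_of_shift
      have heq2 : (fun s : ℝ => g (lam₀ + s)) = g' := by
        funext s; rw [hgg]
      rw [heq2]; exact hD'
    choose! f' hf'1 hf'2 using hgdiff
    have hbound := norm_image_sub_le_of_norm_deriv_le_segment'
      (f := g) (f' := f') (a := 0) (b := t) (C := C ^ 2)
      (fun x hx => (hf'1 x hx).hasDerivWithinAt)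
      (fun x hx => by rw [Real.norm_eq_abs]; exact hf'2 x (Set.mem_Icc_of_Ico hx))
      t (Set.right_mem_Icc.mpr ht0.le)
    refine ⟨g t - g 0, hG, ?_⟩
    rw [← Real.norm_eq_abs]
    calc ‖g t - g 0‖ ≤ C ^ 2 * (t - 0) := hbound
      _ = C ^ 2 * t := by ring
  choose! G' hG'1 hG'2 using key
  have hGt : ‖G t - G 0‖ ≤ C ^ 2 * t * (t - 0) :=
    norm_image_sub_le_of_norm_deriv_le_segment'
      (f := G) (f' := G') (a := 0) (b := t) (C := C ^ 2 * t)
      (fun x hx => (hG'1 x hx).hasDerivWithinAt)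
      (fun x hx => by rw [Real.norm_eq_abs]; exact hG'2 x (Set.mem_Icc_of_Ico hx))
      t (Set.right_mem_Icc.mpr ht0.le)
  have hsq : ‖ΦK u - ΦK v‖ ^ 2 = G t - G 0 := by
    have hGt0 : G t - G 0 = K v v - K u v - (K v u - K u u) := by
      rw [hGdef]
      simp only [← hvte, zero_smul, add_zero]
    rw [hGt0, hK v v, hK u v, hK v u, hK u u, norm_sub_sq_real,
      real_inner_comm (ΦK v) (ΦK u), ← real_inner_self_eq_norm_sq,
      ← real_inner_self_eq_norm_sq]
    ring
  have hle : ‖ΦK u - ΦK v‖ ^ 2 ≤ (C * t) ^ 2 := by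
    rw [hsq]
    calc G t - G 0 ≤ |G t - G 0| := le_abs_self _
      _ ≤ C ^ 2 * t * (t - 0) := by rw [← Real.norm_eq_abs]; exact hGt
      _ = (C * t) ^ 2 := by ring
  have hfin : ‖ΦK u - ΦK v‖ ≤ C * t := by
    nlinarith [norm_nonneg (ΦK u - ΦK v), mul_nonneg hC ht0.le]
  rw [norm_sub_rev u v]
  exact hfin
end
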